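/- In the unification of two left-hand side subterms satisfying the invariants Conv, Equalize, and OF, the rule Conflict can never apply: if f(s̄)=g(t̄) occurs with both sides overlap-free, n-convertible instances, and joinability of n-convertible terms, then f = g. -/

import Mathlib

/-- Finite first-order terms. -/
inductive Tm (F V : Type) : Type
  | var : V → Tm F V
  | app : F → List (Tm F V) → Tm F V

namespace Tm
variable {F V W : Type}

/-- Application of a substitution to a term. -/
def subst (σ : V → Tm F W) : Tm F V → Tm F W
  | .var x => σ x
  | .app f l => .app f (l.attach.map fun t => t.1.subst σ)
  decreasing_by simp only [Tm.app.sizeOf_spec]; have := List.sizeOf_lt_of_mem t.2; omega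

/-- Subterm of `t` at a position (a list of argument indices), if any. -/
def at? : Tm F V → List ℕ → Option (Tm F V)
  | t, [] => some t
  | .var _, _ :: _ => none
  | .app _ l, i :: p =>
    match l[i]? with
    | some t => t.at? p
    | none => none

mutual
/-- Linearization of a term: the occurrence of a variable `x` at position `p`
is renamed into the fresh variable `(x, p)`. -/
def lin : Tm F V → List ℕ → Tm F (V × List ℕ)
  | .var x, p => .var (x, p)
  | .app f l, p => .app f (linList l p 0)

def linList : List (Tm F V) → List ℕ → ℕ → List (Tm F (V × List ℕ))
  | [], _, _ => []
  | t :: ts, p, i => lin t (p ++ [i]) :: linList ts p (i + 1)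
end

/-- `x` occurs in `t`. -/
inductive HasVar (x : V) : Tm F V → Prop
  | var : HasVar x (.var x)
  | app {f l t} : t ∈ l → HasVar x t → HasVar x (.app f l)

/-- `t` is not a variable. -/
def NonVar (t : Tm F V) : Prop := ∀ z, t ≠ .var z

/-- Reflexive subterm relation. -/
inductive Sub : Tm F V → Tm F V → Prop
  | refl (t) : Sub t t
  | app {s t f l} : t ∈ l → Sub s t → Sub s (.app f l)

end Tm

variable {F V : Type}

/-- Plain one-step rewriting with the rewrite system `R` (rules instantiated by
substitutions, closure under contexts). -/
inductive Rw (R : Set (Tm F V × Tm F V)) : Tm F V → Tm F V → Prop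
  | rule {l r} (σ : V → Tm F V) : (l, r) ∈ R →
      Rw R (l.subst σ) (r.subst σ)
  | app (f : F) (pre post : List (Tm F V)) {s t} :
      Rw R s t → Rw R (.app f (pre ++ s :: post)) (.app f (pre ++ t :: post))

/-- `Shape rel l u v`: `u` rewrites to `v` (by `rel`-derivations) using steps
occurring only strictly below the non-variable positions of the pattern `l`,
i.e. `u` and `v` coincide with `l` at its non-variable positions and at each
variable position of `l` the subterm of `u` rewrites to that of `v`. -/
inductive Shape (rel : Tm F V → Tm F V → Prop) : Tm F V → Tm F V → Tm F V → Prop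
  | var (x : V) {u v : Tm F V} : Relation.ReflTransGen rel u v → Shape rel (.var x) u v
  | app (f : F) (ls us vs : List (Tm F V)) :
      ls.length = us.length → us.length = vs.length →
      (∀ i (h1 : i < ls.length) (h2 : i < us.length) (h3 : i < vs.length),
        Shape rel ls[i] us[i] vs[i]) →
      Shape rel (.app f ls) (.app f us) (.app f vs)

/-- Sub-rewriting: `u` sub-rewrites to `v` at some position `p` with rule
`l → r` if `u` rewrites (strictly below `p·FPos(l)`) to `u[lθ]_p` and
`v = u[rθ]_p`. -/
inductive SubRw (R : Set (Tm F V × Tm F V)) : Tm F V → Tm F V → Prop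
  | rule {l r u} (σ : V → Tm F V) : (l, r) ∈ R →
      Shape (Rw R) l u (l.subst σ) → SubRw R u (r.subst σ)
  | app (f : F) (pre post : List (Tm F V)) {s t} :
      SubRw R s t → SubRw R (.app f (pre ++ s :: post)) (.app f (pre ++ t :: post))

/-- `v` is overlap-free (OF): no non-variable subterm of the linearization of
`v` unifies with a (variable-disjoint) linearized left-hand side of `R`. -/
def OF (R : Set (Tm F V × Tm F V)) (v : Tm F V) : Prop :=
  ∀ g d, (g, d) ∈ R → ∀ s, Tm.Sub s (Tm.lin v []) → s.NonVar →
    ∀ σ τ : V × List ℕ → Tm F (V × List ℕ), s.subst σ ≠ (Tm.lin g []).subst τ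

/-- `u` is subterm overlap-free (SOF): every subterm of `u` at a non-root
(non-variable) position is overlap-free. -/
def SOF (R : Set (Tm F V × Tm F V)) (u : Tm F V) : Prop :=
  ∀ q : List ℕ, q ≠ [] → ∀ s, u.at? q = some s → s.NonVar → OF R s

/-- The disjointness condition (DLO): whenever a linearized left-hand side `ḡ`
unifies with the subterm at a non-variable position `p` of a linearized
left-hand side `l̄`, both `l|_p` and `g` are subterm overlap-free. `R` is a
layered system iff it satisfies (DLO). -/
def Layered (R : Set (Tm F V × Tm F V)) : Prop :=
  ∀ l r g d, (l, r) ∈ R → (g, d) ∈ R →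
    ∀ (p : List ℕ) (s : Tm F (V × List ℕ)) (w : Tm F V),
      (Tm.lin l []).at? p = some s → l.at? p = some w → s.NonVar →
      (∃ σ τ : V × List ℕ → Tm F (V × List ℕ),
        s.subst σ = (Tm.lin g []).subst τ) →
      SOF R w ∧ SOF R g

/-- `t` is a linearized redex: an instance of the linearized left-hand side of
some rule of `R`. -/
def IsLinRedex (R : Set (Tm F V × Tm F V)) (t : Tm F V) : Prop :=
  ∃ l r, ∃ σ : V × List ℕ → Tm F V, (l, r) ∈ R ∧ t = (Tm.lin l []).subst σ

/-- `rk` is the rank function of the layered system `R`: the rank of a term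
which is not a linearized redex is the maximal rank of its immediate subterms,
and the rank of a linearized redex `t` is `1` plus the supremum of the ranks of
`σ(x)` over all rules `l → r`, matchers `σ` with `t = l̄σ` and variables `x` of
`l̄`. -/
def RankSpec (R : Set (Tm F V × Tm F V)) (rk : Tm F V → ℕ) : Prop :=
  (∀ x : V, rk (.var x) = 0) ∧
  (∀ (f : F) (l : List (Tm F V)), ¬ IsLinRedex R (.app f l) →
    rk (.app f l) = (l.map rk).foldr max 0) ∧
  (∀ t : Tm F V, IsLinRedex R t →
    rk t = 1 + sSup {m | ∃ l r σ x, (l, r) ∈ R ∧ t = (Tm.lin l []).subst σ ∧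
      Tm.HasVar x (Tm.lin l []) ∧ m = rk (σ x)})

/-- `R` is rank non-increasing (w.r.t. the rank function `rk`). -/
def RankNonInc (R : Set (Tm F V × Tm F V)) (rk : Tm F V → ℕ) : Prop :=
  ∀ u v, Rw R u v → rk v ≤ rk u

/-- `u` and `v` are `n`-convertible: `R`-convertible through terms of rank at
most `n`. -/
def ConvN (R : Set (Tm F V × Tm F V)) (rk : Tm F V → ℕ) (n : ℕ)
    (u v : Tm F V) : Prop :=
  rk u ≤ n ∧ rk v ≤ n ∧
  Relation.EqvGen (fun a b => Rw R a b ∧ rk a ≤ n ∧ rk b ≤ n) u v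

section AuxLemmas
variable {F V W X : Type}

theorem Tm.subst_var (σ : V → Tm F W) (x : V) : (Tm.var x).subst σ = σ x := by
  rw [Tm.subst]

theorem Tm.subst_app (σ : V → Tm F W) (f : F) (l : List (Tm F V)) :
    (Tm.app f l).subst σ = .app f (l.map (Tm.subst σ)) := by
  rw [Tm.subst]
  congr 1
  exact List.attach_map_val (l := l) (f := Tm.subst σ)

theorem Tm.subst_subst (σ : V → Tm F W) (τ : W → Tm F X) :
    ∀ t : Tm F V, (t.subst σ).subst τ = t.subst fun x => (σ x).subst τ
  | .var x => by simp only [Tm.subst_var]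
  | .app f l => by
    simp only [Tm.subst_app, List.map_map]
    congr 1
    refine List.map_congr_left fun t ht => ?_
    exact Tm.subst_subst σ τ t
termination_by t => sizeOf t
decreasing_by simp only [Tm.app.sizeOf_spec]; have := List.sizeOf_lt_of_mem ht; omega

theorem Tm.linList_length : ∀ (ls : List (Tm F V)) (p : List ℕ) (k : ℕ),
    (Tm.linList ls p k).length = ls.length
  | [], _, _ => rfl
  | t :: ts, p, k => by
    simp only [Tm.linList, List.length_cons, Tm.linList_length ts p (k + 1)]

theorem Tm.linList_getElem : ∀ (ls : List (Tm F V)) (p : List ℕ) (k i : ℕ) (h : i < ls.length),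
    (Tm.linList ls p k)[i]'(by rw [Tm.linList_length]; exact h) = Tm.lin ls[i] (p ++ [k + i])
  | t :: ts, p, k, 0, h => by simp [Tm.linList]
  | t :: ts, p, k, i + 1, h => by
    simp only [Tm.linList, List.getElem_cons_succ]
    rw [Tm.linList_getElem ts p (k + 1) i (by simpa using h)]
    congr 3
    omega

theorem Tm.mem_linList : ∀ {u : Tm F (V × List ℕ)} (ls : List (Tm F V)) (p : List ℕ) (k : ℕ),
    u ∈ Tm.linList ls p k → ∃ i, ∃ h : i < ls.length, u = Tm.lin ls[i] (p ++ [k + i])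
  | u, t :: ts, p, k, h => by
    rw [Tm.linList] at h
    rcases List.mem_cons.1 h with h | h
    · exact ⟨0, by simp, by simpa using h⟩
    · obtain ⟨i, hi, rfl⟩ := Tm.mem_linList ts p (k + 1) h
      refine ⟨i + 1, by simp only [List.length_cons]; exact Nat.succ_lt_succ hi, ?_⟩
      simp only [List.getElem_cons_succ]
      rw [show k + (i + 1) = k + 1 + i from by omega]

theorem Tm.hasVar_lin : ∀ (t : Tm F V) (p : List ℕ) (y : V × List ℕ),
    Tm.HasVar y (Tm.lin t p) → ∃ q, y.2 = p ++ q
  | .var x, p, y, h => by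
    rw [Tm.lin] at h
    cases h
    exact ⟨[], by simp⟩
  | .app f ls, p, y, h => by
    rw [Tm.lin] at h
    cases h with
    | app hmem hv =>
      obtain ⟨i, hi, rfl⟩ := Tm.mem_linList ls p 0 hmem
      obtain ⟨q, hq⟩ := Tm.hasVar_lin ls[i] (p ++ [0 + i]) y hv
      exact ⟨[0 + i] ++ q, by rw [hq, List.append_assoc]⟩
termination_by t => sizeOf t
decreasing_by
  simp only [Tm.app.sizeOf_spec]
  have := List.sizeOf_lt_of_mem (ls.getElem_mem hi)
  omega

theorem Tm.subst_congr : ∀ (t : Tm F V) (σ τ : V → Tm F W),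
    (∀ y, Tm.HasVar y t → σ y = τ y) → t.subst σ = t.subst τ
  | .var x, σ, τ, h => by simp only [Tm.subst_var]; exact h x .var
  | .app f l, σ, τ, h => by
    simp only [Tm.subst_app]
    congr 1
    refine List.map_congr_left fun t ht => ?_
    exact Tm.subst_congr t σ τ fun y hy => h y (.app ht hy)
termination_by t => sizeOf t
decreasing_by simp only [Tm.app.sizeOf_spec]; have := List.sizeOf_lt_of_mem ht; omega

theorem Tm.lin_subst (σ : V → Tm F W) : ∀ (t : Tm F V) (p : List ℕ),
    (Tm.lin t p).subst (fun y => σ y.1) = t.subst σ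
  | .var x, p => by simp only [Tm.lin, Tm.subst_var]
  | .app f ls, p => by
    rw [Tm.lin, Tm.subst_app, Tm.subst_app]
    congr 1
    apply List.ext_getElem
    · rw [List.length_map, List.length_map, Tm.linList_length]
    · intro i h1 h2
      simp only [List.getElem_map]
      rw [Tm.linList_getElem ls p 0 i (by simpa using h2)]
      exact Tm.lin_subst σ (ls[i]'(by simpa using h2)) (p ++ [0 + i])
termination_by t => sizeOf t
decreasing_by
  simp only [Tm.app.sizeOf_spec]
  have := List.sizeOf_lt_of_mem (ls.getElem_mem (by simpa using h2))
  omega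

theorem getElem_append_cons_ne {α : Type*} :
    ∀ (pre : List α) (a b : α) (post : List α) (j : ℕ) (h1 : j < (pre ++ a :: post).length)
      (h2 : j < (pre ++ b :: post).length), j ≠ pre.length →
      (pre ++ a :: post)[j] = (pre ++ b :: post)[j]
  | [], a, b, post, j, h1, h2, hne => by
    match j with
    | 0 => exact absurd rfl hne
    | j + 1 => simp
  | x :: pre, a, b, post, 0, h1, h2, hne => rfl
  | x :: pre, a, b, post, j + 1, h1, h2, hne => by
    simp only [List.cons_append, List.getElem_cons_succ]
    exact getElem_append_cons_ne pre a b post j (by simpa using h1) (by simpa using h2)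
      (by simpa using hne)

theorem key_lemma (R : Set (Tm F V × Tm F V)) :
    ∀ (t : Tm F V) (p : List ℕ) (θ : V × List ℕ → Tm F V) (v : Tm F V),
    (∀ g d, (g, d) ∈ R → ∀ s', Tm.Sub s' (Tm.lin t p) → s'.NonVar →
      ∀ σ τ : V × List ℕ → Tm F (V × List ℕ), s'.subst σ ≠ (Tm.lin g []).subst τ) →
    Rw R ((Tm.lin t p).subst θ) v → ∃ θ', v = (Tm.lin t p).subst θ'
  | .var x, p, θ, v, H, hrw => ⟨fun _ => v, by rw [Tm.lin, Tm.subst_var]⟩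
  | .app f ls, p, θ, v, H, hrw => by
    classical
    rw [Tm.lin, Tm.subst_app] at hrw
    have hlen : (Tm.linList ls p 0).length = ls.length := Tm.linList_length ls p 0
    generalize hu : Tm.app f (List.map (Tm.subst θ) (Tm.linList ls p 0)) = u at hrw
    cases hrw with
    | rule σ0 hmem =>
      rename_i l r
      exfalso
      have hnv : (Tm.lin (Tm.app f ls) p).NonVar := by
        intro z h
        rw [Tm.lin] at h
        cases h
      apply H l r hmem (Tm.lin (.app f ls) p) (Tm.Sub.refl _) hnv
        (fun y => (θ y).subst (fun x => .var (x, [])))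
        (fun y => (σ0 y.1).subst (fun x => .var (x, [])))
      calc (Tm.lin (.app f ls) p).subst (fun y => (θ y).subst (fun x => .var (x, [])))
          = ((Tm.lin (.app f ls) p).subst θ).subst (fun x => .var (x, [])) :=
            (Tm.subst_subst θ _ _).symm
        _ = (l.subst σ0).subst (fun x => .var (x, [])) := by
            rw [Tm.lin, Tm.subst_app, hu]
        _ = ((Tm.lin l []).subst (fun y => σ0 y.1)).subst (fun x => .var (x, [])) := by
            rw [Tm.lin_subst]
        _ = (Tm.lin l []).subst (fun y => (σ0 y.1).subst (fun x => .var (x, []))) :=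
            Tm.subst_subst _ _ _
    | app f0 pre post hst =>
      rename_i s0 t0
      injection hu with hf hL
      subst hf
      have hlen2 : ls.length = pre.length + (post.length + 1) := by
        have := congrArg List.length hL
        simpa [hlen] using this
      have hi : pre.length < ls.length := by omega
      have hLi : (Tm.linList ls p 0)[pre.length]'(by rw [hlen]; exact hi)
          = Tm.lin (ls[pre.length]'hi) (p ++ [pre.length]) := by
        have := Tm.linList_getElem ls p 0 pre.length hi
        simpa using this
      have hs0 : s0 = (Tm.lin (ls[pre.length]'hi) (p ++ [pre.length])).subst θ := by
        have h1 : (pre ++ s0 :: post)[pre.length]'(by simp) = s0 := by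
          simp [List.getElem_append_right]
        have h2 := List.getElem_of_eq hL
          (show pre.length < (List.map (Tm.subst θ) (Tm.linList ls p 0)).length by
            simp [hlen]; omega)
        rw [← h1, ← h2, List.getElem_map, hLi]
      have H' : ∀ g d, (g, d) ∈ R → ∀ s',
          Tm.Sub s' (Tm.lin (ls[pre.length]'hi) (p ++ [pre.length])) → s'.NonVar →
          ∀ σ τ : V × List ℕ → Tm F (V × List ℕ),
            s'.subst σ ≠ (Tm.lin g []).subst τ := by
        intro g d hg s' hsub hnv σ τ
        refine H g d hg s' ?_ hnv σ τ
        rw [Tm.lin]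
        have hmem' : Tm.lin (ls[pre.length]'hi) (p ++ [pre.length]) ∈ Tm.linList ls p 0 :=
          hLi ▸ List.getElem_mem _
        exact Tm.Sub.app hmem' hsub
      obtain ⟨θ', ht0⟩ := key_lemma R (ls[pre.length]'hi) (p ++ [pre.length]) θ t0 H'
        (hs0 ▸ hst)
      refine ⟨fun y => if Tm.HasVar y (Tm.lin (ls[pre.length]'hi) (p ++ [pre.length]))
        then θ' y else θ y, ?_⟩
      rw [Tm.lin, Tm.subst_app]
      congr 1
      apply List.ext_getElem
      · simp [hlen]; omega
      · intro j hj1 hj2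
        have hjls : j < ls.length := by
          simp only [List.length_append, List.length_cons] at hj1; omega
        have hrj : (List.map (Tm.subst (fun y =>
              if Tm.HasVar y (Tm.lin (ls[pre.length]'hi) (p ++ [pre.length]))
              then θ' y else θ y)) (Tm.linList ls p 0))[j]'hj2
            = (Tm.lin (ls[j]'hjls) (p ++ [j])).subst (fun y =>
              if Tm.HasVar y (Tm.lin (ls[pre.length]'hi) (p ++ [pre.length]))
              then θ' y else θ y) := by
          rw [List.getElem_map]
          congr 1
          have := Tm.linList_getElem ls p 0 j hjls
          simpa using this
        rw [hrj]
        by_cases hji : j = pre.length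
        · subst hji
          have hL1 : (pre ++ t0 :: post)[pre.length]'hj1 = t0 := by
            simp [List.getElem_append_right]
          rw [hL1, ht0]
          exact Tm.subst_congr _ _ _ (fun y hy => (if_pos hy).symm)
        · have hL1 : (pre ++ t0 :: post)[j]'hj1 = (pre ++ s0 :: post)[j]'(by
              simp only [List.length_append, List.length_cons] at hj1 ⊢; omega) :=
            getElem_append_cons_ne pre t0 s0 post j _ _ hji
          have h2 := List.getElem_of_eq hL
            (show j < (List.map (Tm.subst θ) (Tm.linList ls p 0)).length by
              simp [hlen]; omega)
          rw [hL1, ← h2, List.getElem_map]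
          have hLj : (Tm.linList ls p 0)[j]'(by rw [hlen]; exact hjls)
              = Tm.lin (ls[j]'hjls) (p ++ [j]) := by
            have := Tm.linList_getElem ls p 0 j hjls
            simpa using this
          rw [hLj]
          refine Tm.subst_congr _ _ _ (fun y hy => ?_)
          rw [if_neg]
          intro hy2
          obtain ⟨q1, hq1⟩ := Tm.hasVar_lin _ _ y hy
          obtain ⟨q2, hq2⟩ := Tm.hasVar_lin _ _ y hy2
          apply hji
          have hq : (p ++ [j]) ++ q1 = (p ++ [pre.length]) ++ q2 := hq1 ▸ hq2
          rw [List.append_assoc, List.append_assoc] at hq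
          have := congrArg (fun m => m[p.length]?) hq
          rw [List.getElem?_append_right (le_refl p.length),
            List.getElem?_append_right (le_refl p.length)] at this
          simpa using this
termination_by t => sizeOf t
decreasing_by
  all_goals
    simp only [Tm.app.sizeOf_spec]
    have := List.sizeOf_lt_of_mem (ls.getElem_mem hi)
    omega

theorem reach_lemma (R : Set (Tm F V × Tm F V)) {t : Tm F V} (hOF : OF R t) {u c : Tm F V}
    (h : Relation.ReflTransGen (Rw R) u c) :
    (∃ θ0, u = (Tm.lin t []).subst θ0) → ∃ θ1, c = (Tm.lin t []).subst θ1 := by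
  induction h with
  | refl => exact id
  | tail _ hbc ih =>
    intro h0
    obtain ⟨θ0, rfl⟩ := ih h0
    exact key_lemma R t [] θ0 _ hOF hbc

end AuxLemmas

/-- in the setting of the unification invariants, the rule
Conflict can never apply: for an equation `f(s̄) = g(t̄)` whose two sides are
overlap-free and whose linearized `θ`-instances are `n`-convertible, assuming
that `n`-convertible terms are joinable, the root symbols must coincide:
`f = g`. -/
theorem conflict_never_applies
    (R : Set (Tm F V × Tm F V)) (hlay : Layered R)
    (rk : Tm F V → ℕ) (hrk : RankSpec R rk) (hni : RankNonInc R rk)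
    (n : ℕ) (f g : F) (ss ts : List (Tm F V))
    (hOFl : OF R (.app f ss)) (hOFr : OF R (.app g ts))
    (θ : V × List ℕ → Tm F V)
    (hconv : ConvN R rk n ((Tm.lin (.app f ss) []).subst θ)
      ((Tm.lin (.app g ts) []).subst θ))
    -- n-convertible terms are assumed joinable
    (hjoin : ∀ a b, ConvN R rk n a b →
      ∃ c, Relation.ReflTransGen (Rw R) a c ∧ Relation.ReflTransGen (Rw R) b c) :
    f = g := by
  obtain ⟨c, h1, h2⟩ := hjoin _ _ hconv
  obtain ⟨θ1, hc1⟩ := reach_lemma R hOFl h1 ⟨θ, rfl⟩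
  obtain ⟨θ2, hc2⟩ := reach_lemma R hOFr h2 ⟨θ, rfl⟩
  have h3 := hc1.symm.trans hc2
  rw [Tm.lin, Tm.lin, Tm.subst_app, Tm.subst_app] at h3
  injection h3 with hf _
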